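/- Let ρ > 0 and k ≥ 1. Let Q = {q_1,…,q_k} be a set of k centers with c(P,Q) = opt(P,k), let {P_1,…,P_k} be the induced partition of P with every P_i nonempty, and for each i let μ_i attain opt(P_i,1). Define ε := ρ·((opt(P,k) − opt(P,2k))/w_min)^{1/z} (well-defined since opt(P,k) ≥ opt(P,2k) ≥ 0). Then for every set X of models and every per-point cost function cost : ℝ^d × X → ℝ with cost(p,x) ≥ 1 for all p and x, and ρ-Lipschitz in the point argument, S = {μ_1,…,μ_k} with weights u_i := Σ_{p∈P_i} w_p is an ε-coreset for P w.r.t. the sum cost and an ε-coreset w.r.t. the maximum cost. (Corollary 1) -/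
import Mathlib


open scoped Classical

/-- Points of `ℝ^d` with the Euclidean norm. -/
abbrev Pt (d : ℕ) := EuclideanSpace ℝ (Fin d)

/-- Weighted clustering cost `c(P,Q) = Σ_{p∈P} w_p · (min_{q∈Q} ‖p−q‖)^z`
(the minimum is expressed as an infimum, which agrees with the minimum
for nonempty finite `Q`). -/
noncomputable def cCost {d : ℕ} (z : ℝ) (w : Pt d → ℝ) (P Q : Finset (Pt d)) : ℝ :=
  ∑ p ∈ P, w p * (sInf ((fun q => dist p q) '' (Q : Set (Pt d)))) ^ z

/-- Optimal `k`-clustering cost `opt(P,k) = inf { c(P,Q) : |Q| = k }`. -/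
noncomputable def optCost {d : ℕ} (z : ℝ) (w : Pt d → ℝ) (P : Finset (Pt d)) (k : ℕ) : ℝ :=
  sInf { r : ℝ | ∃ Q : Finset (Pt d), Q.card = k ∧ r = cCost z w P Q }

lemma sInf_img_nonneg {d : ℕ} (p : Pt d) (Q : Finset (Pt d)) :
    0 ≤ sInf ((fun q => dist p q) '' (Q : Set (Pt d))) :=
  Real.sInf_nonneg (by rintro r ⟨q, _, rfl⟩; exact dist_nonneg)

lemma sInf_img_le {d : ℕ} (p : Pt d) {Q : Finset (Pt d)} {q0 : Pt d} (h : q0 ∈ Q) :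
    sInf ((fun q => dist p q) '' (Q : Set (Pt d))) ≤ dist p q0 :=
  csInf_le ⟨0, by rintro r ⟨q, _, rfl⟩; exact dist_nonneg⟩ ⟨q0, by simpa using h, rfl⟩

lemma cCost_nonneg {d : ℕ} {z : ℝ} {w : Pt d → ℝ} {P : Finset (Pt d)}
    (hw : ∀ p ∈ P, 0 ≤ w p) (Q : Finset (Pt d)) : 0 ≤ cCost z w P Q :=
  Finset.sum_nonneg fun p hp => mul_nonneg (hw p hp)
    (Real.rpow_nonneg (sInf_img_nonneg p Q) z)

lemma optCost_le {d : ℕ} {z : ℝ} {w : Pt d → ℝ} {P : Finset (Pt d)}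
    (hw : ∀ p ∈ P, 0 ≤ w p) {Q : Finset (Pt d)} {n : ℕ} (h : Q.card = n) :
    optCost z w P n ≤ cCost z w P Q :=
  csInf_le ⟨0, by rintro r ⟨Q', _, rfl⟩; exact cCost_nonneg hw Q'⟩ ⟨Q, h, rfl⟩

lemma cCost_anti {d : ℕ} {z : ℝ} (hz : 0 ≤ z) {w : Pt d → ℝ} {P Q Q' : Finset (Pt d)}
    (hw : ∀ p ∈ P, 0 ≤ w p) (hne : Q.Nonempty) (hQQ : Q ⊆ Q') :
    cCost z w P Q' ≤ cCost z w P Q := by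
  refine Finset.sum_le_sum fun p hp => ?_
  refine mul_le_mul_of_nonneg_left ?_ (hw p hp)
  refine Real.rpow_le_rpow (sInf_img_nonneg p Q') ?_ hz
  exact csInf_le_csInf ⟨0, by rintro r ⟨q, _, rfl⟩; exact dist_nonneg⟩
    ((Finset.coe_nonempty.mpr hne).image _)
    (Set.image_mono (Finset.coe_subset.mpr hQQ))

lemma cCost_le_assign {d : ℕ} {z : ℝ} (hz : 0 ≤ z) {w : Pt d → ℝ} {P Q : Finset (Pt d)}
    (hw : ∀ p ∈ P, 0 ≤ w p) {g : Pt d → Pt d} (hg : ∀ p ∈ P, g p ∈ Q) :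
    cCost z w P Q ≤ ∑ p ∈ P, w p * dist p (g p) ^ z :=
  Finset.sum_le_sum fun p hp => mul_le_mul_of_nonneg_left
    (Real.rpow_le_rpow (sInf_img_nonneg p Q) (sInf_img_le p (hg p hp)) hz) (hw p hp)

lemma cCost_singleton {d : ℕ} (z : ℝ) (w : Pt d → ℝ) (P : Finset (Pt d)) (c : Pt d) :
    cCost z w P {c} = ∑ p ∈ P, w p * dist p c ^ z := by
  unfold cCost
  refine Finset.sum_congr rfl fun p _ => ?_
  rw [Finset.coe_singleton, Set.image_singleton, csInf_singleton]

/-- Corollary 1: with the optimal `k`-clustering centers and induced partition as in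
Theorem 1, and `ε := ρ·((opt(P,k) − opt(P,2k))/w_min)^{1/z}`, for every model set `X` and
every per-point cost that is `≥ 1` and `ρ`-Lipschitz in the point, `{μ i}` with weights
`Σ_{p∈Pc i} w_p` is an `ε`-coreset for `P` w.r.t. the sum cost and the maximum cost. -/
theorem corollary1 {d : ℕ} (z : ℝ) (hz : 0 < z)
    (P : Finset (Pt d)) (hP : P.Nonempty)
    (w : Pt d → ℝ) (hw : ∀ p ∈ P, 0 < w p)
    (ρ : ℝ) (hρ : 0 < ρ)
    (k : ℕ) (hk : 0 < k)
    (q : Fin k → Pt d) (hq : Function.Injective q)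
    (hQopt : cCost z w P (Finset.univ.image q) = optCost z w P k)
    (f : Pt d → Fin k)
    (hfmin : ∀ p ∈ P, dist p (q (f p))
        = sInf ((fun c => dist p c) '' ((Finset.univ.image q : Finset (Pt d)) : Set (Pt d))))
    (Pc : Fin k → Finset (Pt d)) (hPc : ∀ i, Pc i = P.filter fun p => f p = i)
    (hne : ∀ i, (Pc i).Nonempty)
    (μ : Fin k → Pt d) (hμ : ∀ i, cCost z w (Pc i) {μ i} = optCost z w (Pc i) 1)
    (ε : ℝ)
    (hεdef : ε = ρ * ((optCost z w P k - optCost z w P (2 * k)) / P.inf' hP w) ^ (1 / z))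
    (X : Type*) (cost : Pt d → X → ℝ)
    (hc1 : ∀ p x, 1 ≤ cost p x)
    (hlip : ∀ (x : X) (p p' : Pt d), |cost p x - cost p' x| ≤ ρ * dist p p') :
    ∀ x : X,
      ((1 - ε) * (∑ p ∈ P, w p * cost p x) ≤ (∑ i, (∑ p ∈ Pc i, w p) * cost (μ i) x) ∧
       (∑ i, (∑ p ∈ Pc i, w p) * cost (μ i) x) ≤ (1 + ε) * (∑ p ∈ P, w p * cost p x)) ∧
      ((1 - ε) * P.sup' hP (fun p => cost p x)
          ≤ Finset.univ.sup' (Finset.univ_nonempty_iff.mpr ⟨⟨0, hk⟩⟩) (fun i => cost (μ i) x) ∧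
       Finset.univ.sup' (Finset.univ_nonempty_iff.mpr ⟨⟨0, hk⟩⟩) (fun i => cost (μ i) x)
          ≤ (1 + ε) * P.sup' hP (fun p => cost p x)) := by
  have hwnn : ∀ p ∈ P, 0 ≤ w p := fun p hp => (hw p hp).le
  have hwmin : 0 < P.inf' hP w := by
    obtain ⟨p0, hp0, hEq⟩ := P.exists_mem_eq_inf' hP w
    rw [hEq]; exact hw p0 hp0
  have hmem : ∀ i, ∀ p ∈ Pc i, p ∈ P ∧ f p = i := by
    intro i p hp; rw [hPc i] at hp; exact Finset.mem_filter.mp hp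
  have hmem' : ∀ p ∈ P, p ∈ Pc (f p) := fun p hp => by
    rw [hPc (f p)]; exact Finset.mem_filter.mpr ⟨hp, rfl⟩
  -- Key per-point bound
  have hkey : ∀ p ∈ P, (P.inf' hP w) * dist p (μ (f p)) ^ z
      ≤ optCost z w P k - optCost z w P (2 * k) := by
    rcases subsingleton_or_nontrivial (Pt d) with hsub | hnt
    · intro p hp
      have hd0 : dist p (μ (f p)) = 0 := dist_eq_zero.mpr (Subsingleton.elim _ _)
      rw [hd0, Real.zero_rpow hz.ne', mul_zero]
      have hoptk : optCost z w P k = 0 := by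
        rw [← hQopt]
        refine Finset.sum_eq_zero fun p' _ => ?_
        have hs0 : sInf ((fun c => dist p' c) ''
            ((Finset.univ.image q : Finset (Pt d)) : Set (Pt d))) = 0 := by
          refine le_antisymm ?_ (sInf_img_nonneg _ _)
          calc sInf _ ≤ dist p' (q ⟨0, hk⟩) :=
                sInf_img_le p' (Finset.mem_image_of_mem q (Finset.mem_univ _))
            _ = 0 := by rw [Subsingleton.elim p' (q ⟨0, hk⟩), dist_self]
        rw [hs0, Real.zero_rpow hz.ne', mul_zero]
      have hopt2k : optCost z w P (2 * k) = 0 := by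
        have hemp : { r : ℝ | ∃ Q : Finset (Pt d), Q.card = 2 * k ∧ r = cCost z w P Q } = ∅ := by
          ext r
          simp only [Set.mem_setOf_eq, Set.mem_empty_iff_false, iff_false, not_exists]
          rintro Q ⟨hQ, -⟩
          have h1 : Q.card ≤ 1 := Finset.card_le_one.mpr fun a _ b _ => Subsingleton.elim a b
          omega
        rw [optCost, hemp, Real.sInf_empty]
      rw [hoptk, hopt2k]; norm_num
    · have hInf : Infinite (Pt d) := by
        obtain ⟨v, hv⟩ := exists_ne (0 : Pt d)
        exact Infinite.of_injective (fun r : ℝ => r • v) (smul_left_injective ℝ hv)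
      intro p hp
      set i := f p with hidef
      set Qs : Finset (Pt d) := Finset.univ.image q with hQsdef
      have hQscard : Qs.card = k := by
        rw [hQsdef, Finset.card_image_of_injective _ hq, Finset.card_univ, Fintype.card_fin]
      set S0 : Finset (Pt d) := ((Qs.erase (q i)) ∪ Finset.univ.image μ) ∪ {p} with hS0def
      have hpS0 : p ∈ S0 := by simp [hS0def]
      have hμS0 : ∀ j, μ j ∈ S0 := fun j => by
        simp only [hS0def, Finset.mem_union]
        exact Or.inl (Or.inr (Finset.mem_image_of_mem μ (Finset.mem_univ j)))
      have hqS0 : ∀ j, j ≠ i → q j ∈ S0 := fun j hj => by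
        simp only [hS0def, Finset.mem_union]
        exact Or.inl (Or.inl (Finset.mem_erase.mpr ⟨fun h => hj (hq h),
          Finset.mem_image_of_mem q (Finset.mem_univ j)⟩))
      have hcardS0 : S0.card ≤ 2 * k := by
        have h1 : (Qs.erase (q i)).card = k - 1 := by
          rw [Finset.card_erase_of_mem (by
            rw [hQsdef]; exact Finset.mem_image_of_mem q (Finset.mem_univ i)), hQscard]
        have h2 : (Finset.univ.image μ).card ≤ k := by
          refine le_trans Finset.card_image_le ?_
          simp
        have h3 := Finset.card_union_le ((Qs.erase (q i)) ∪ Finset.univ.image μ)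
          ({p} : Finset (Pt d))
        have h4 := Finset.card_union_le (Qs.erase (q i)) (Finset.univ.image μ)
        have h5 : ({p} : Finset (Pt d)).card = 1 := Finset.card_singleton p
        rw [← hS0def] at h3
        omega
      obtain ⟨T, hST, hTcard⟩ := Infinite.exists_superset_card_eq S0 (2 * k) hcardS0
      set g : Pt d → Pt d :=
        fun p' => if p' = p then p else if f p' = i then μ i else q (f p') with hgdef
      have hg : ∀ p' ∈ P, g p' ∈ S0 := by
        intro p' _
        simp only [hgdef]
        split_ifs with h1 h2
        · exact hpS0
        · exact hμS0 i
        · exact hqS0 _ h2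
      have hB : optCost z w P (2 * k) ≤ ∑ p' ∈ P, w p' * dist p' (g p') ^ z :=
        calc optCost z w P (2 * k) ≤ cCost z w P T := optCost_le hwnn hTcard
          _ ≤ cCost z w P S0 := cCost_anti hz.le hwnn ⟨p, hpS0⟩ hST
          _ ≤ _ := cCost_le_assign hz.le hwnn hg
      have hpPci : p ∈ Pc i := by rw [hidef]; exact hmem' p hp
      have hsplit : ∀ F : Pt d → ℝ, ∑ p' ∈ P, F p'
          = (∑ p' ∈ Pc i, F p') + ∑ p' ∈ P.filter (fun p' => ¬ f p' = i), F p' := by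
        intro F
        rw [hPc i]
        exact (Finset.sum_filter_add_sum_filter_not P (fun p' => f p' = i) F).symm
      have hBsum : ∑ p' ∈ P, w p' * dist p' (g p') ^ z
          = (∑ p' ∈ (Pc i).erase p, w p' * dist p' (μ i) ^ z)
            + ∑ p' ∈ P.filter (fun p' => ¬ f p' = i), w p' * dist p' (q (f p')) ^ z := by
        rw [hsplit (fun p' => w p' * dist p' (g p') ^ z)]
        congr 1
        · rw [← Finset.sum_erase_add (Pc i) _ hpPci]
          have hzero : w p * dist p (g p) ^ z = 0 := by
            have : g p = p := by simp [hgdef]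
            rw [this, dist_self, Real.zero_rpow hz.ne', mul_zero]
          rw [hzero, add_zero]
          refine Finset.sum_congr rfl fun p' hp' => ?_
          obtain ⟨hne', hmm⟩ := Finset.mem_erase.mp hp'
          have hf' : f p' = i := (hmem i p' hmm).2
          have : g p' = μ i := by simp [hgdef, hne', hf']
          rw [this]
        · refine Finset.sum_congr rfl fun p' hp' => ?_
          have hf' : ¬ f p' = i := (Finset.mem_filter.mp hp').2
          have hne' : p' ≠ p := fun h => hf' (by rw [h, ← hidef])
          have : g p' = q (f p') := by simp [hgdef, hne', hf']
          rw [this]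
      have hA1 : optCost z w P k = (∑ p' ∈ Pc i, w p' * dist p' (q i) ^ z)
          + ∑ p' ∈ P.filter (fun p' => ¬ f p' = i), w p' * dist p' (q (f p')) ^ z := by
        rw [← hQopt]
        have hQcost : cCost z w P Qs = ∑ p' ∈ P, w p' * dist p' (q (f p')) ^ z := by
          unfold cCost
          exact Finset.sum_congr rfl fun p' hp' => by rw [← hfmin p' hp']
        rw [hQcost, hsplit (fun p' => w p' * dist p' (q (f p')) ^ z)]
        congr 1
        refine Finset.sum_congr rfl fun p' hp' => ?_
        rw [(hmem i p' hp').2]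
      have hC2 : cCost z w (Pc i) {μ i}
          = (∑ p' ∈ (Pc i).erase p, w p' * dist p' (μ i) ^ z) + w p * dist p (μ i) ^ z := by
        rw [cCost_singleton]
        exact (Finset.sum_erase_add (Pc i) _ hpPci).symm
      have hwPc : ∀ p' ∈ Pc i, 0 ≤ w p' := fun p' hp' => hwnn p' (hmem i p' hp').1
      have hC2leC1 : cCost z w (Pc i) {μ i} ≤ ∑ p' ∈ Pc i, w p' * dist p' (q i) ^ z := by
        rw [hμ i, ← cCost_singleton z w (Pc i) (q i)]
        exact optCost_le hwPc (Finset.card_singleton _)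
      have hwp : P.inf' hP w ≤ w p := Finset.inf'_le w hp
      have hdz : 0 ≤ dist p (μ i) ^ z := Real.rpow_nonneg dist_nonneg z
      have hmulw := mul_le_mul_of_nonneg_right hwp hdz
      rw [hBsum] at hB
      linarith
  -- consequences of the key bound
  obtain ⟨p0, hp0⟩ := id hP
  have hΔ : 0 ≤ optCost z w P k - optCost z w P (2 * k) :=
    le_trans (mul_nonneg hwmin.le (Real.rpow_nonneg dist_nonneg z)) (hkey p0 hp0)
  have hε0 : 0 ≤ ε := by
    rw [hεdef]
    exact mul_nonneg hρ.le (Real.rpow_nonneg (div_nonneg hΔ hwmin.le) _)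
  have hdist : ∀ p ∈ P, ρ * dist p (μ (f p)) ≤ ε := by
    intro p hp
    have h1 : dist p (μ (f p)) ^ z
        ≤ (optCost z w P k - optCost z w P (2 * k)) / P.inf' hP w :=
      (le_div_iff₀ hwmin).mpr (by linarith [hkey p hp])
    have h2 : (dist p (μ (f p)) ^ z) ^ (1 / z)
        ≤ ((optCost z w P k - optCost z w P (2 * k)) / P.inf' hP w) ^ (1 / z) :=
      Real.rpow_le_rpow (Real.rpow_nonneg dist_nonneg z) h1 (by positivity)
    have h3 : (dist p (μ (f p)) ^ z) ^ (1 / z) = dist p (μ (f p)) := by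
      rw [← Real.rpow_mul dist_nonneg, mul_one_div_cancel hz.ne', Real.rpow_one]
    rw [h3] at h2
    rw [hεdef]
    exact mul_le_mul_of_nonneg_left h2 hρ.le
  intro x
  have hclose : ∀ p ∈ P, (1 - ε) * cost p x ≤ cost (μ (f p)) x
      ∧ cost (μ (f p)) x ≤ (1 + ε) * cost p x := by
    intro p hp
    have h1 : |cost (μ (f p)) x - cost p x| ≤ ε :=
      calc |cost (μ (f p)) x - cost p x| ≤ ρ * dist (μ (f p)) p := hlip x _ _
        _ = ρ * dist p (μ (f p)) := by rw [dist_comm]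
        _ ≤ ε := hdist p hp
    obtain ⟨hl, hr⟩ := abs_le.mp h1
    have hc := hc1 p x
    have hεc : ε ≤ ε * cost p x := le_mul_of_one_le_right hε0 hc
    constructor <;> nlinarith
  have hsumfib : ∀ F : Pt d → ℝ, ∑ i, ∑ p ∈ Pc i, F p = ∑ p ∈ P, F p := by
    intro F
    simp_rw [hPc]
    exact Finset.sum_fiberwise P f F
  refine ⟨⟨?_, ?_⟩, ?_, ?_⟩
  · have e1 : (1 - ε) * ∑ p ∈ P, w p * cost p x
        = ∑ p ∈ P, w p * ((1 - ε) * cost p x) := by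
      rw [Finset.mul_sum]
      exact Finset.sum_congr rfl fun p _ => by ring
    rw [e1, ← hsumfib (fun p => w p * ((1 - ε) * cost p x))]
    refine Finset.sum_le_sum fun i _ => ?_
    rw [Finset.sum_mul]
    refine Finset.sum_le_sum fun p hp => ?_
    obtain ⟨hpP, hfp⟩ := hmem i p hp
    refine mul_le_mul_of_nonneg_left ?_ (hwnn p hpP)
    have h := (hclose p hpP).1
    rw [hfp] at h
    exact h
  · have e1 : (1 + ε) * ∑ p ∈ P, w p * cost p x
        = ∑ p ∈ P, w p * ((1 + ε) * cost p x) := by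
      rw [Finset.mul_sum]
      exact Finset.sum_congr rfl fun p _ => by ring
    rw [e1, ← hsumfib (fun p => w p * ((1 + ε) * cost p x))]
    refine Finset.sum_le_sum fun i _ => ?_
    rw [Finset.sum_mul]
    refine Finset.sum_le_sum fun p hp => ?_
    obtain ⟨hpP, hfp⟩ := hmem i p hp
    refine mul_le_mul_of_nonneg_left ?_ (hwnn p hpP)
    have h := (hclose p hpP).2
    rw [hfp] at h
    exact h
  · obtain ⟨pm, hpm, hpmEq⟩ := Finset.exists_mem_eq_sup' hP (fun p => cost p x)
    rw [hpmEq]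
    calc (1 - ε) * cost pm x ≤ cost (μ (f pm)) x := (hclose pm hpm).1
      _ ≤ Finset.univ.sup' (Finset.univ_nonempty_iff.mpr ⟨⟨0, hk⟩⟩) (fun i => cost (μ i) x) :=
        Finset.le_sup' (fun i => cost (μ i) x) (Finset.mem_univ (f pm))
  · refine Finset.sup'_le _ _ fun i _ => ?_
    obtain ⟨p, hp⟩ := hne i
    obtain ⟨hpP, hfp⟩ := hmem i p hp
    have h2 := (hclose p hpP).2
    rw [hfp] at h2
    calc cost (μ i) x ≤ (1 + ε) * cost p x := h2
      _ ≤ (1 + ε) * P.sup' hP (fun p => cost p x) :=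
        mul_le_mul_of_nonneg_left (Finset.le_sup' (fun p => cost p x) hpP) (by linarith)
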